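/- Graded commutativity of the cup product in tangent cohomology: for every bilinear map μ ∈ C² and all multilinear maps f ∈ C^m, g ∈ C^n with δ_μ f = 0 and δ_μ g = 0, one has f ⌣ g − (−1)^{mn} g ⌣ f = (−1)^{n−1} δ_μ(f ∘ g); in particular, the graded commutator of cocycles under the cup product is a coboundary of δ_μ. -/

import Mathlib

/-!
Gerstenhaber's pre-Lie identity: for `f` multilinear, the associator
`(f, G, H) = (f ∘ G) ∘ H - f ∘ (G ∘ H)` equals `⟨f|GH⟩ + (-1)^{|G||H|} ⟨f|HG⟩`, hence is graded
symmetric in `G, H`. Since a cocycle `g` satisfies `g ∘ μ = (-1)^{|g|} μ ∘ g`, symmetry of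
`(f, g, μ)` gives `(f ∘ g) ∘ μ = (-1)^{|g|} (f ∘ μ) ∘ g = (-1)^{|g| + |f|} (μ ∘ f) ∘ g`. For the
binary `μ` the braces `⟨μ|fg⟩`, `⟨μ|gf⟩` are the cup products up to sign, so the pre-Lie identity
for `(μ, f, g)` turns `(μ ∘ f) ∘ g` into `μ ∘ (f ∘ g) ± f ⌣ g ± g ⌣ f`. In
`δ_μ (f ∘ g) = ±μ ∘ (f ∘ g) - (f ∘ g) ∘ μ` the terms `μ ∘ (f ∘ g)` then cancel.
-/

open Finset

section OperadPrelude

variable {K : Type*} [CommRing K] {L : Type*} [AddCommGroup L] [Module K L]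

/-- `C K L n`: the `K`-module of `n`-multilinear maps `L^n → L`
(the degree-`n` component of the endomorphism operad of `L`). -/
abbrev C (K L : Type*) [CommRing K] [AddCommGroup L] [Module K L] (n : ℕ) :=
  MultilinearMap K (fun _ : Fin n => L) L

/-- The extension of an `n`-ary multilinear operation to sequences `ℕ → L`:
it evaluates `f` on the first `n` entries of the sequence.  Two `n`-ary
multilinear operations are equal iff their extensions are equal, so operadic
identities are stated as identities between extensions. -/
def ex {n : ℕ} (f : C K L n) : (ℕ → L) → L := fun x => f fun j => x j.1

/-- The sign `(-1)^e` for an integer exponent `e`. -/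
def sgn (e : ℤ) : ℤ := (((-1 : ℤˣ) ^ e : ℤˣ) : ℤ)

/-- Partial composition `f ∘ᵢ g`, where `n = deg g`:
`(f ∘ᵢ g)(x₀, x₁, …) = (-1)^{i(n-1)} f(x₀,…,x_{i-1}, g(x_i,…,x_{i+n-1}), x_{i+n},…)`. -/
def pc (n i : ℕ) (f g : (ℕ → L) → L) : (ℕ → L) → L :=
  fun x => sgn ((i : ℤ) * ((n : ℤ) - 1)) •
    f fun j => if j < i then x j else if j = i then g (fun k => x (i + k)) else x (j + n - 1)

/-- Total composition `f ∘ g := Σ_{i=0}^{m-1} f ∘ᵢ g`, where `m = deg f`, `n = deg g`. -/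
def tc (m n : ℕ) (f g : (ℕ → L) → L) : (ℕ → L) → L :=
  fun x => ∑ i ∈ Finset.range m, pc n i f g x

/-- The associator `(h, f, g) := (h ∘ f) ∘ g − h ∘ (f ∘ g)` of the total composition,
where `m = deg h`, `n = deg f`, `p = deg g`. -/
def assoc (m n p : ℕ) (h f g : (ℕ → L) → L) : (ℕ → L) → L :=
  fun x => tc (m + n - 1) p (tc m n h f) g x - tc m (n + p - 1) h (tc n p f g) x

/-- The brace `⟨h|fg⟩ := Σ (h ∘ᵢ f) ∘ⱼ g`, summed over `0 ≤ i ≤ m-2`,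
`i + n ≤ j ≤ m + n - 2`, where `m = deg h`, `n = deg f`, `p = deg g`. -/
def br2 (m n p : ℕ) (h f g : (ℕ → L) → L) : (ℕ → L) → L :=
  fun x => ∑ i ∈ Finset.range (m - 1), ∑ j ∈ Finset.Icc (i + n) (m + n - 2),
    pc p j (pc n i h f) g x

/-- The triple brace `⟨h|fgb⟩ := Σ ((h ∘ᵢ f) ∘ⱼ g) ∘ₖ b`, summed over `0 ≤ i ≤ m-3`,
`i + n ≤ j ≤ m + n - 3`, `j + p ≤ k ≤ m + n + p - 3`, where
`m = deg h`, `n = deg f`, `p = deg g`, `q = deg b`. -/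
def br3 (m n p q : ℕ) (h f g b : (ℕ → L) → L) : (ℕ → L) → L :=
  fun x => ∑ i ∈ Finset.range (m - 2), ∑ j ∈ Finset.Icc (i + n) (m + n - 3),
    ∑ k ∈ Finset.Icc (j + p) (m + n + p - 3),
      pc q k (pc p j (pc n i h f) g) b x

/-- The Gerstenhaber bracket `[f,g] := f ∘ g − (-1)^{|f||g|} g ∘ f`,
where `m = deg f`, `n = deg g`, `|f| = m - 1`, `|g| = n - 1`. -/
def gb (m n : ℕ) (f g : (ℕ → L) → L) : (ℕ → L) → L :=
  fun x => tc m n f g x - sgn (((m : ℤ) - 1) * ((n : ℤ) - 1)) • tc n m g f x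

/-- The cup product `f ⌣ g := (-1)^{deg f} (μ ∘₀ f) ∘_{deg f} g`,
where `m = deg f`, `n = deg g`. -/
def cup (μ : C K L 2) (m n : ℕ) (f g : (ℕ → L) → L) : (ℕ → L) → L :=
  fun x => sgn (m : ℤ) • pc n m (pc m 0 (ex μ) f) g x

/-- The coboundary operator `δ_μ f := −[f, μ]`, where `m = deg f`. -/
def delta (μ : C K L 2) (m : ℕ) (f : (ℕ → L) → L) : (ℕ → L) → L :=
  fun x => - gb m 2 f (ex μ) x

lemma sgn_add (a b : ℤ) : sgn (a + b) = sgn a * sgn b := by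
  simp only [sgn, zpow_add, Units.val_mul]

lemma sgn_eq_of_even_sub {a b : ℤ} (h : Even (a - b)) : sgn a = sgn b :=
  congrArg Units.val ((Int.negOnePow_eq_iff a b).2 h)

lemma sgn_sub_one (a : ℤ) : sgn (a - 1) = -sgn a := by
  rw [sub_eq_add_neg, sgn_add, show sgn (-1) = -1 from rfl, mul_neg_one]

lemma sgn_mul_self (a : ℤ) : sgn a * sgn a = 1 := by
  rw [← sgn_add, ← sgn_eq_of_even_sub (a := 0) ⟨-a, by ring⟩]
  rfl

lemma sgn_smul_sgn_smul (a b : ℤ) (v : L) : sgn a • sgn b • v = sgn (a + b) • v := by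
  rw [smul_smul, sgn_add]

section Plug

variable {α : Type*}

def plug (i : ℕ) (v : α) (n : ℕ) (x : ℕ → α) : ℕ → α :=
  fun t => if t < i then x t else if t = i then v else x (t + n - 1)

def shift (i : ℕ) (x : ℕ → α) : ℕ → α := fun k => x (i + k)

lemma plug_plug_of_lt {i j : ℕ} (hji : j < i) (a b : α) (n p : ℕ) (x : ℕ → α) :
    plug i a n (plug j b p x) = plug j b p (plug (i + p - 1) a n x) := by
  funext t
  simp only [plug]
  split_ifs <;> first | rfl | (exfalso; omega) | (congr 1; omega)

lemma plug_plug_add {i k n : ℕ} (hk : k < n) (a b : α) (p : ℕ) (x : ℕ → α) :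
    plug i a n (plug (i + k) b p x) = plug i a (n + p - 1) x := by
  funext t
  simp only [plug]
  split_ifs <;> first | rfl | (exfalso; omega) | (congr 1; omega)

lemma shift_plug_of_lt {i j : ℕ} (hji : j < i) (b : α) (p : ℕ) (x : ℕ → α) :
    shift i (plug j b p x) = shift (i + p - 1) x := by
  funext k
  simp only [shift, plug]
  split_ifs <;> first | rfl | (exfalso; omega) | (congr 1; omega)

lemma shift_plug_add (i k : ℕ) (b : α) (p : ℕ) (x : ℕ → α) :
    shift i (plug (i + k) b p x) = plug k b p (shift i x) := by
  funext t
  simp only [shift, plug]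
  split_ifs <;> first | rfl | (exfalso; omega) | (congr 1; omega)

lemma shift_shift (i k : ℕ) (x : ℕ → α) : shift k (shift i x) = shift (i + k) x := by
  funext t
  simp only [shift, Nat.add_assoc]

end Plug

lemma pc_apply (n i : ℕ) (F G : (ℕ → L) → L) (x : ℕ → L) :
    pc n i F G x = sgn (i * (n - 1)) • F (plug i (G (shift i x)) n x) := rfl

lemma dependsOn_ex {p : ℕ} (h : C K L p) : DependsOn (ex h) (Set.Iio p) :=
  fun _ _ hxy => congrArg h (funext fun j => hxy j j.2)

lemma pc_pc_of_lt (F G H : (ℕ → L) → L) {n p i j : ℕ} (hji : j < i)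
    (hH : DependsOn H (Set.Iio p)) :
    pc p j (pc n i F G) H = sgn ((n - 1) * (p - 1)) • pc n (i + p - 1) (pc p j F H) G := by
  funext x
  have hH' : H (shift j (plug (i + p - 1) (G (shift (i + p - 1) x)) n x)) = H (shift j x) :=
    hH fun t ht => by
      simp only [Set.mem_Iio] at ht
      simp only [shift, plug]
      split_ifs <;> first | rfl | (exfalso; omega)
  simp only [Pi.smul_apply, pc_apply, sgn_smul_sgn_smul, shift_plug_of_lt hji, hH',
    plug_plug_of_lt hji]
  congr 1
  refine sgn_eq_of_even_sub ⟨-((n - 1) * (p - 1)), ?_⟩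
  push_cast [show 1 ≤ i + p by omega]
  ring

lemma ex_plug {m i : ℕ} (f : C K L m) (hi : i < m) (v : L) (n : ℕ) (x : ℕ → L) :
    ex f (plug i v n x) = f.toLinearMap (fun j : Fin m => plug i 0 n x j) ⟨i, hi⟩ v := by
  rw [MultilinearMap.toLinearMap_apply, ex]
  congr 1
  funext j
  rcases eq_or_ne j ⟨i, hi⟩ with rfl | hj
  · simp [plug]
  · have hj' : (j : ℕ) ≠ i := fun h => hj (Fin.ext h)
    simp only [Function.update_of_ne hj, plug, hj', if_false]

lemma pc_ex_zsmul_right {m i : ℕ} (f : C K L m) (hi : i < m) (c : ℤ) (G : (ℕ → L) → L)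
    (p : ℕ) : pc p i (ex f) (c • G) = c • pc p i (ex f) G := by
  funext x
  simp only [Pi.smul_apply, pc_apply, ex_plug f hi, map_zsmul, smul_comm c]

lemma pc_ex_sum_right {m i : ℕ} (f : C K L m) (hi : i < m) {ι : Type*} (s : Finset ι)
    (G : ι → (ℕ → L) → L) (p : ℕ) (x : ℕ → L) :
    pc p i (ex f) (fun y => ∑ a ∈ s, G a y) x = ∑ a ∈ s, pc p i (ex f) (G a) x := by
  simp only [pc_apply, ex_plug f hi, map_sum, smul_sum]

lemma pc_sum_left {ι : Type*} (s : Finset ι) (F : ι → (ℕ → L) → L) (H : (ℕ → L) → L)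
    (p j : ℕ) (x : ℕ → L) :
    pc p j (fun y => ∑ a ∈ s, F a y) H x = ∑ a ∈ s, pc p j (F a) H x := by
  simp only [pc_apply, smul_sum]

lemma pc_pc_add {m n i k : ℕ} (f : C K L m) (G H : (ℕ → L) → L) (p : ℕ)
    (hi : i < m) (hk : k < n) :
    pc p (i + k) (pc n i (ex f) G) H = pc (n + p - 1) i (ex f) (pc p k G H) := by
  funext x
  simp only [pc_apply, shift_plug_add, plug_plug_add hk, shift_shift, ex_plug f hi, map_zsmul,
    sgn_smul_sgn_smul]
  congr 1
  refine sgn_eq_of_even_sub ⟨0, ?_⟩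
  push_cast [show 1 ≤ n + p by omega]
  ring

lemma tc_zsmul_left (c : ℤ) (F H : (ℕ → L) → L) (m p : ℕ) :
    tc m p (c • F) H = c • tc m p F H := by
  funext x
  simp only [tc, Pi.smul_apply, pc_apply, smul_comm _ c, smul_sum]

lemma tc_ex_zsmul_right {m : ℕ} (f : C K L m) (c : ℤ) (G : (ℕ → L) → L) (p : ℕ) :
    tc m p (ex f) (c • G) = c • tc m p (ex f) G := by
  funext x
  simp only [tc, Pi.smul_apply, smul_sum]
  exact sum_congr rfl fun i hi =>
    congrFun (pc_ex_zsmul_right f (mem_range.1 hi) c G p) x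

lemma tc_zero_left (n : ℕ) (F G : (ℕ → L) → L) : tc 0 n F G = 0 := by
  funext x
  simp [tc]

lemma tc_ex_zero_right {m : ℕ} (f : C K L m) (p : ℕ) : tc m p (ex f) 0 = 0 := by
  simpa using tc_ex_zsmul_right f 0 0 p

-- The slot `j` of `(f ∘ᵢ G) ∘ⱼ H` lies before, inside or after the block occupied by `G`.
lemma sum_pc_pc_eq {m n i : ℕ} (f : C K L m) (G H : (ℕ → L) → L) (p : ℕ) (hi : i < m)
    (x : ℕ → L) :
    ∑ j ∈ range (m + n - 1), pc p j (pc n i (ex f) G) H x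
      = ∑ j ∈ range i, pc p j (pc n i (ex f) G) H x
        + pc (n + p - 1) i (ex f) (tc n p G H) x
        + ∑ j ∈ Ico (i + n) (m + n - 1), pc p j (pc n i (ex f) G) H x := by
  have nested : ∑ j ∈ Ico i (i + n), pc p j (pc n i (ex f) G) H x
      = pc (n + p - 1) i (ex f) (tc n p G H) x := by
    unfold tc
    rw [sum_Ico_eq_sum_range, add_tsub_cancel_left, pc_ex_sum_right f hi]
    exact sum_congr rfl fun k hk =>
      congrFun (pc_pc_add f G H p hi (mem_range.1 hk)) x
  rw [← nested, range_eq_Ico, range_eq_Ico,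
    sum_Ico_consecutive _ (Nat.zero_le i) (Nat.le_add_right i n),
    sum_Ico_consecutive _ (Nat.zero_le _) (by omega)]

lemma br2_eq_sum_Ico (m n p : ℕ) (h F G : (ℕ → L) → L) (x : ℕ → L) :
    br2 m n p h F G x
      = ∑ i ∈ range m, ∑ j ∈ Ico (i + n) (m + n - 1), pc p j (pc n i h F) G x := by
  rcases m with _ | m
  · simp [br2]
  · simp only [br2, Nat.add_sub_cancel]
    rw [sum_range_succ, show m + 1 + n - 1 = m + n by omega, Ico_self,
      sum_empty, add_zero]
    refine sum_congr rfl fun i hi => sum_congr ?_ fun _ _ => rfl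
    have := mem_range.1 hi
    ext j
    simp only [mem_Icc, mem_Ico]
    omega

lemma br2_eq_sum_range_range (m n p : ℕ) (h H G : (ℕ → L) → L) (x : ℕ → L) :
    br2 m p n h H G x
      = ∑ i ∈ range m, ∑ j ∈ range i, pc n (i + p - 1) (pc p j h H) G x := by
  have reindex : ∀ j ∈ range m,
      ∑ i ∈ Ico (j + p) (m + p - 1), pc n i (pc p j h H) G x
        = ∑ i ∈ Ico (j + 1) m, pc n (i + p - 1) (pc p j h H) G x := by
    intro j _
    rw [sum_Ico_eq_sum_range, sum_Ico_eq_sum_range,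
      show m + p - 1 - (j + p) = m - (j + 1) by omega]
    exact sum_congr rfl fun l _ => by rw [show j + 1 + l + p - 1 = j + p + l by omega]
  rw [br2_eq_sum_Ico, sum_congr rfl reindex]
  refine (sum_comm' fun i j => ?_).symm
  simp only [mem_range, mem_Ico]
  omega

lemma assoc_ex_eq_br2_add_smul_br2 {m n p : ℕ} (f : C K L m) (G H : (ℕ → L) → L)
    (hH : DependsOn H (Set.Iio p)) :
    assoc m n p (ex f) G H
      = br2 m n p (ex f) G H + sgn ((n - 1) * (p - 1)) • br2 m p n (ex f) H G := by
  funext x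
  have disjoint : ∀ i ∈ range m, ∑ j ∈ range i, pc p j (pc n i (ex f) G) H x
      = sgn ((n - 1) * (p - 1)) • ∑ j ∈ range i, pc n (i + p - 1) (pc p j (ex f) H) G x := by
    intro i _
    rw [smul_sum]
    exact sum_congr rfl fun j hj =>
      congrFun (pc_pc_of_lt _ _ _ (mem_range.1 hj) hH) x
  unfold assoc tc
  simp only [pc_sum_left, Pi.add_apply, Pi.smul_apply]
  rw [sum_comm, sum_congr rfl fun i hi =>
      sum_pc_pc_eq f G H p (mem_range.1 hi) x,
    sum_add_distrib, sum_add_distrib, sum_congr rfl disjoint,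
    br2_eq_sum_Ico, br2_eq_sum_range_range, smul_sum]
  unfold tc
  abel

lemma assoc_ex_comm {m n p : ℕ} (f : C K L m) (G H : (ℕ → L) → L)
    (hG : DependsOn G (Set.Iio n)) (hH : DependsOn H (Set.Iio p)) :
    assoc m n p (ex f) G H = sgn ((n - 1) * (p - 1)) • assoc m p n (ex f) H G := by
  rw [assoc_ex_eq_br2_add_smul_br2 f G H hH, assoc_ex_eq_br2_add_smul_br2 f H G hG, smul_add,
    smul_smul, mul_comm ((p : ℤ) - 1), sgn_mul_self, one_smul, add_comm]

lemma br2_two (n p : ℕ) (h F G : (ℕ → L) → L) : br2 2 n p h F G = pc p n (pc n 0 h F) G := by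
  funext x
  simp [br2]

lemma tc_eq_of_delta_eq_zero (μ : C K L 2) {m : ℕ} (F : (ℕ → L) → L) (hF : delta μ m F = 0) :
    tc m 2 F (ex μ) = sgn (m - 1) • tc 2 m (ex μ) F := by
  funext x
  have hx := congrFun hF x
  simp only [delta, gb, Pi.zero_apply, neg_eq_zero, sub_eq_zero, Nat.cast_ofNat] at hx
  simpa using hx

lemma tc_tc_of_delta_eq_zero (μ : C K L 2) {m n : ℕ} (f : C K L m) (g : C K L n)
    (hf : delta μ m (ex f) = 0) (hg : delta μ n (ex g) = 0) :
    tc (m + n - 1) 2 (tc m n (ex f) (ex g)) (ex μ)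
      = sgn (n - 1) • sgn (m - 1) • tc (2 + m - 1) n (tc 2 m (ex μ) (ex f)) (ex g) := by
  have h : tc (m + n - 1) 2 (tc m n (ex f) (ex g)) (ex μ)
        - tc m (n + 2 - 1) (ex f) (tc n 2 (ex g) (ex μ))
      = sgn ((n - 1) * (2 - 1)) • (tc (m + 2 - 1) n (tc m 2 (ex f) (ex μ)) (ex g)
          - tc m (2 + n - 1) (ex f) (tc 2 n (ex μ) (ex g))) :=
    assoc_ex_comm f (ex g) (ex μ) (dependsOn_ex g) (dependsOn_ex μ)
  rw [tc_eq_of_delta_eq_zero μ _ hf, tc_eq_of_delta_eq_zero μ _ hg, tc_ex_zsmul_right,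
    tc_zsmul_left, Nat.add_comm n 2, Nat.add_comm m 2, show (2 : ℤ) - 1 = 1 by norm_num,
    mul_one, smul_sub, sub_left_inj] at h
  exact h

/-- graded commutativity of the cup product in tangent
cohomology: for cocycles `f, g`, the graded commutator of the cup product is
the coboundary `(-1)^{n-1} δ_μ(f ∘ g)`. -/
theorem cup_graded_commutative_in_tangent_cohomology
    (μ : C K L 2) {m n : ℕ} (f : C K L m) (g : C K L n)
    (hf : delta μ m (ex f) = 0) (hg : delta μ n (ex g) = 0) :
    cup μ m n (ex f) (ex g) - sgn ((m : ℤ) * (n : ℤ)) • cup μ n m (ex g) (ex f)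
      = sgn ((n : ℤ) - 1) • delta μ (m + n - 1) (tc m n (ex f) (ex g)) := by
  have pre_lie := assoc_ex_eq_br2_add_smul_br2 (n := m) μ (ex f) (ex g) (dependsOn_ex g)
  rw [br2_two, br2_two] at pre_lie
  funext x
  have hT := congrFun (tc_tc_of_delta_eq_zero μ f g hf hg) x
  have hC := congrFun pre_lie x
  simp only [assoc, Pi.add_apply, Pi.smul_apply] at hT hC
  simp only [cup, delta, gb, Pi.sub_apply, Pi.smul_apply, hT]
  set fg := pc n m (pc m 0 (ex μ) (ex f)) (ex g) x
  set gf := pc m n (pc n 0 (ex μ) (ex g)) (ex f) x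
  set μf_g := tc (2 + m - 1) n (tc 2 m (ex μ) (ex f)) (ex g) x
  set μ_fg := tc 2 (m + n - 1) (ex μ) (tc m n (ex f) (ex g)) x
  have hsign : sgn ((m : ℤ) * n) * sgn n = sgn ((m : ℤ) - 1) * sgn ((m - 1) * (n - 1)) := by
    rw [← sgn_add, ← sgn_add]
    exact sgn_eq_of_even_sub ⟨n, by ring⟩
  have hμ_fg : sgn ((n : ℤ) - 1) • sgn ((((m + n - 1 : ℕ) : ℤ) - 1) * ((2 : ℕ) - 1)) • μ_fg
      = sgn ((m : ℤ) - 1) • μ_fg := by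
    -- for `m = n = 0` the truncated degree `m + n - 1 = 0` spoils the sign, but `f ∘ g = 0`
    rcases Nat.eq_zero_or_pos m with rfl | hm
    · simp [μ_fg, tc_zero_left, tc_ex_zero_right]
    · rw [sgn_smul_sgn_smul]
      congr 1
      refine sgn_eq_of_even_sub ⟨n - 1, ?_⟩
      push_cast [show 1 ≤ m + n by omega]
      ring
  linear_combination (norm := module) sgn ((m : ℤ) - 1) • hC + sgn_sub_one (m : ℤ) • fg
    - hsign • gf - hμ_fg + (sgn ((m : ℤ) - 1) * sgn_mul_self ((n : ℤ) - 1)) • μf_g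

end OperadPrelude
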